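/- arXiv:2304.01754 — 5 statements merged into one kernel-verified Lean document; each statement's English description precedes it below -/
import Mathlib

section
/- For all ν ∈ ℕ and x ∈ ℝ, the derivative of the square of the ν-th normalized Hermite polynomial satisfies (h_ν²)'(x) = 2x · Σ_{κ=1}^{ν} (-1)^{ν-κ} h_{κ-1}²(x). -/
open Polynomial

/-- The `ν`-th Hermite polynomial, normalized in `L²` of the standard Gaussian measure:
`h_ν = He_ν / √(ν!)`, where `He_ν` is the probabilists' Hermite polynomial. -/
noncomputable def normHermite (ν : ℕ) (x : ℝ) : ℝ :=
  Polynomial.aeval x (Polynomial.hermite ν) / Real.sqrt (Nat.factorial ν)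

lemma derivative_hermite_succ (n : ℕ) :
    derivative (hermite (n + 1)) = (n + 1) • hermite n := by
  induction n with
  | zero => simp [hermite_one, hermite_zero]
  | succ n ih =>
    rw [hermite_succ (n+1), derivative_sub, derivative_mul, derivative_X, ih, hermite_succ n]
    simp only [derivative_smul, ih, smul_sub, smul_smul]
    ring_nf

lemma hasDerivAt_normHermite (ν : ℕ) (x : ℝ) :
    HasDerivAt (fun t => normHermite ν t)
      (aeval x (derivative (hermite ν)) / Real.sqrt (Nat.factorial ν)) x := by
  simpa [normHermite, div_eq_mul_inv] using
    ((hermite ν).hasDerivAt_aeval x (𝕜 := ℝ)).mul_const ((Real.sqrt (Nat.factorial ν))⁻¹)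

lemma deriv_sq_normHermite_eq (ν : ℕ) (x : ℝ) :
    deriv (fun t => (normHermite ν t) ^ 2) x
      = 2 * aeval x (hermite ν) * aeval x (derivative (hermite ν)) / (Nat.factorial ν : ℝ) := by
  have h := ((hasDerivAt_normHermite ν x).pow 2).deriv
  rw [show (fun t => (normHermite ν t) ^ 2) = (fun t => normHermite ν t) ^ 2 from rfl, h]
  have hfac : (0:ℝ) < (Nat.factorial ν : ℝ) := by exact_mod_cast Nat.factorial_pos ν
  have hs : Real.sqrt (Nat.factorial ν) * Real.sqrt (Nat.factorial ν) = (Nat.factorial ν : ℝ) :=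
    Real.mul_self_sqrt hfac.le
  field_simp [normHermite]
  have hs0 : Real.sqrt (Nat.factorial ν) ≠ 0 := by positivity
  have hdiv : aeval x (hermite ν) / Real.sqrt (Nat.factorial ν) * Real.sqrt (Nat.factorial ν)
      = aeval x (hermite ν) := div_mul_cancel₀ _ hs0
  rw [show (2:ℕ) - 1 = 1 from rfl, pow_one, normHermite]
  push_cast
  linear_combination (-2 * (aeval x (hermite ν) / Real.sqrt (Nat.factorial ν)) * aeval x (derivative (hermite ν))) * hs + (2 * aeval x (derivative (hermite ν)) * Real.sqrt (Nat.factorial ν)) * hdiv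

lemma key (ν : ℕ) (x : ℝ) :
    deriv (fun t => (normHermite (ν + 1) t) ^ 2) x
      = 2 * x * (normHermite ν x) ^ 2 - deriv (fun t => (normHermite ν t) ^ 2) x := by
  rw [deriv_sq_normHermite_eq, deriv_sq_normHermite_eq, derivative_hermite_succ]
  have hfac : (0:ℝ) < (Nat.factorial ν : ℝ) := by exact_mod_cast Nat.factorial_pos ν
  have hA : aeval x (hermite (ν + 1)) = x * aeval x (hermite ν) - aeval x (derivative (hermite ν)) := by
    rw [hermite_succ]; simp
  have hsmul : (aeval x ((ν + 1) • hermite ν) : ℝ) = (ν + 1 : ℝ) * aeval x (hermite ν) := by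
    simp
  rw [hA, hsmul]
  have hfs : (Nat.factorial (ν + 1) : ℝ) = (ν + 1 : ℝ) * (Nat.factorial ν : ℝ) := by
    push_cast [Nat.factorial_succ]; ring
  rw [hfs]
  have hsq : (normHermite ν x) ^ 2 = (aeval x (hermite ν)) ^ 2 / (Nat.factorial ν : ℝ) := by
    rw [normHermite, div_pow, Real.sq_sqrt hfac.le]
  rw [hsq]
  have hν1 : (ν + 1 : ℝ) ≠ 0 := by positivity
  field_simp

/-- `(h_ν²)'(x) = 2x · Σ_{κ=1}^{ν} (-1)^{ν-κ} h_{κ-1}²(x)`. -/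
theorem deriv_sq_normHermite (ν : ℕ) (x : ℝ) :
    deriv (fun t => (normHermite ν t) ^ 2) x
      = 2 * x * ∑ κ ∈ Finset.Icc 1 ν, (-1 : ℝ) ^ (ν - κ) * (normHermite (κ - 1) x) ^ 2 := by
  induction ν with
  | zero =>
    simp [normHermite, hermite_zero]
  | succ ν ih =>
    rw [key, ih]
    rw [Finset.sum_Icc_succ_top (by omega : 1 ≤ ν + 1)]
    have : ∀ κ ∈ Finset.Icc 1 ν, (-1 : ℝ) ^ (ν + 1 - κ) * (normHermite (κ - 1) x) ^ 2
        = -((-1 : ℝ) ^ (ν - κ) * (normHermite (κ - 1) x) ^ 2) := by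
      intro κ hκ
      rw [Finset.mem_Icc] at hκ
      have : ν + 1 - κ = (ν - κ) + 1 := by omega
      rw [this, pow_succ]; ring
    rw [Finset.sum_congr rfl this, Finset.sum_neg_distrib]
    simp
    ring
end

section
/- Let (α_ν)_{ν∈ℕ} be a non-decreasing sequence of positive reals. For every n ∈ ℕ and every x ≥ 0, the function f_n(x) := Σ_{ν=0}^{n} α_ν^{-1} h_ν(x)² (with α_0 := 1) has nonnegative derivative on [0,∞); in particular f_n is non-decreasing on [0,∞). -/
open Polynomial Finset

namespace HermiteMonotoneAux

lemma derivative_hermite : ∀ n : ℕ, derivative (hermite (n + 1)) = ((n : ℤ[X]) + 1) * hermite n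
  | 0 => by simp [hermite_one]
  | n + 1 => by
    have ih := derivative_hermite n
    rw [hermite_succ (n + 1), derivative_sub, derivative_mul, derivative_X, ih, derivative_mul,
      hermite_succ n]
    simp only [derivative_add, derivative_natCast, derivative_one, zero_add, add_zero, zero_mul]
    push_cast
    ring

/-- Evaluation of the Hermite polynomial. -/
noncomputable def E (ν : ℕ) (x : ℝ) : ℝ := aeval x (hermite ν)

lemma E_deriv_eval (ν : ℕ) (x : ℝ) :
    aeval x (derivative (hermite (ν + 1))) = ((ν : ℝ) + 1) * E ν x := by
  rw [derivative_hermite]; simp [E]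

lemma E_succ (ν : ℕ) (x : ℝ) :
    E (ν + 1) x = x * E ν x - aeval x (derivative (hermite ν)) := by
  simp [E, hermite_succ]

noncomputable def G : ℕ → ℝ → ℝ
  | 0, _ => 0
  | (ν + 1), x => E (ν + 1) x * E ν x / (Nat.factorial ν)

lemma fact_ne (ν : ℕ) : ((Nat.factorial ν : ℝ)) ≠ 0 :=
  Nat.cast_ne_zero.mpr (Nat.factorial_ne_zero ν)

lemma G_succ (ν : ℕ) (x : ℝ) :
    G (ν + 1) x = x * (E ν x ^ 2 / (Nat.factorial ν)) - G ν x := by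
  cases ν with
  | zero =>
    show E 1 x * E 0 x / _ = _
    simp [E, G, hermite_one]
  | succ ν =>
    show E (ν + 2) x * E (ν + 1) x / _ = _ - E (ν + 1) x * E ν x / _
    rw [E_succ (ν + 1), E_deriv_eval ν, Nat.factorial_succ]
    have h1 := fact_ne ν
    have h2 : ((ν : ℝ) + 1) ≠ 0 := by positivity
    push_cast
    field_simp

lemma hasDerivAt_sq (ν : ℕ) (x : ℝ) :
    HasDerivAt (fun t => E ν t ^ 2 / (Nat.factorial ν)) (2 * G ν x) x := by
  have hE : HasDerivAt (fun t => E ν t) (aeval x (derivative (hermite ν))) x := by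
    unfold E; exact (Polynomial.hermite ν).hasDerivAt_aeval x
  have h := (hE.pow 2).div_const (Nat.factorial ν : ℝ)
  refine h.congr_deriv ?_
  symm
  cases ν with
  | zero => simp [G]
  | succ ν =>
    rw [E_deriv_eval ν]
    show 2 * (E (ν + 1) x * E ν x / (Nat.factorial ν)) = _
    rw [Nat.factorial_succ]
    have h1 := fact_ne ν
    have h2 : ((ν : ℝ) + 1) ≠ 0 := by positivity
    push_cast
    field_simp

lemma key (β H A : ℕ → ℝ) (hH : ∀ ν, 0 ≤ H ν)
    (hβ0 : ∀ ν, 1 ≤ ν → 0 ≤ β ν) (hβm : ∀ ν, 1 ≤ ν → β (ν + 1) ≤ β ν)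
    (hA0 : A 0 = 0) (hAs : ∀ ν, A (ν + 1) = H ν - A ν) :
    ∀ n, 0 ≤ ∑ ν ∈ range (n + 1), β ν * A ν ∧
      ∑ ν ∈ range (n + 1), β ν * A ν ≤ ∑ μ ∈ range n, β (μ + 1) * H μ := by
  intro n
  induction n generalizing β with
  | zero => simp [hA0]
  | succ n ih =>
    have ih' := ih (fun k => β (k + 1)) (fun ν _ => hβ0 (ν + 1) (Nat.le_add_left 1 ν))
      (fun ν _ => hβm (ν + 1) (Nat.le_add_left 1 ν))
    have hsplit : ∑ ν ∈ range (n + 2), β ν * A ν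
        = ∑ ν ∈ range (n + 1), β (ν + 1) * H ν - ∑ ν ∈ range (n + 1), β (ν + 1) * A ν := by
      rw [Finset.sum_range_succ' (fun ν => β ν * A ν) (n + 1), hA0, mul_zero, add_zero,
        ← Finset.sum_sub_distrib]
      exact Finset.sum_congr rfl fun ν _ => by rw [hAs ν]; ring
    constructor
    · rw [hsplit]
      have h1 : ∑ ν ∈ range (n + 1), β (ν + 1) * A ν ≤ ∑ μ ∈ range n, β (μ + 2) * H μ :=
        ih'.2
      have h2 : ∑ μ ∈ range n, β (μ + 2) * H μ ≤ ∑ ν ∈ range (n + 1), β (ν + 1) * H ν := by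
        rw [Finset.sum_range_succ]
        have : ∑ μ ∈ range n, β (μ + 2) * H μ ≤ ∑ μ ∈ range n, β (μ + 1) * H μ :=
          Finset.sum_le_sum fun μ _ =>
            mul_le_mul_of_nonneg_right (hβm (μ + 1) (Nat.le_add_left 1 μ)) (hH μ)
        have hn : 0 ≤ β (n + 1) * H n :=
          mul_nonneg (hβ0 (n + 1) (Nat.le_add_left 1 n)) (hH n)
        linarith
      linarith
    · rw [hsplit]
      have h1 : 0 ≤ ∑ ν ∈ range (n + 1), β (ν + 1) * A ν := ih'.1
      linarith

end HermiteMonotoneAux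

open HermiteMonotoneAux in
lemma normHermite_sq (ν : ℕ) (x : ℝ) :
    normHermite ν x ^ 2 = E ν x ^ 2 / (Nat.factorial ν) := by
  rw [normHermite, div_pow, Real.sq_sqrt (by positivity)]
  rfl

open HermiteMonotoneAux in
lemma hasDerivAt_f (α : ℕ → ℝ) (n : ℕ) (x : ℝ) :
    HasDerivAt (fun t => ∑ ν ∈ Finset.range (n + 1), (α ν)⁻¹ * (normHermite ν t) ^ 2)
      (∑ ν ∈ Finset.range (n + 1), (α ν)⁻¹ * (2 * G ν x)) x := by
  have : (fun t => ∑ ν ∈ Finset.range (n + 1), (α ν)⁻¹ * (normHermite ν t) ^ 2)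
      = fun t => ∑ ν ∈ Finset.range (n + 1), (α ν)⁻¹ * (E ν t ^ 2 / (Nat.factorial ν)) := by
    funext t
    exact Finset.sum_congr rfl fun ν _ => by rw [normHermite_sq]
  rw [this]
  exact HasDerivAt.fun_sum fun ν _ => (hasDerivAt_sq ν x).const_mul _

/-- for a non-decreasing sequence `(α_ν)_{ν≥1}` of positive reals (with `α_0 := 1`),
the partial sums `f_n(x) = Σ_{ν=0}^{n} α_ν⁻¹ h_ν(x)²` have nonnegative derivative on `[0,∞)`;
in particular `f_n` is non-decreasing on `[0,∞)`. -/
theorem partial_sum_hermite_monotone (α : ℕ → ℝ) (h0 : α 0 = 1)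
    (hpos : ∀ ν, 1 ≤ ν → 0 < α ν) (hmono : ∀ ν, 1 ≤ ν → α ν ≤ α (ν + 1)) (n : ℕ) :
    (∀ x : ℝ, 0 ≤ x →
        0 ≤ deriv (fun t => ∑ ν ∈ Finset.range (n + 1), (α ν)⁻¹ * (normHermite ν t) ^ 2) x)
      ∧ MonotoneOn (fun t => ∑ ν ∈ Finset.range (n + 1), (α ν)⁻¹ * (normHermite ν t) ^ 2)
          (Set.Ici (0 : ℝ)) := by
  open HermiteMonotoneAux in
  have main : ∀ x : ℝ, 0 ≤ x →
      0 ≤ deriv (fun t => ∑ ν ∈ Finset.range (n + 1), (α ν)⁻¹ * (normHermite ν t) ^ 2) x := by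
    intro x hx
    rw [(hasDerivAt_f α n x).deriv]
    have hk := key (fun ν => (α ν)⁻¹) (fun ν => x * (E ν x ^ 2 / (Nat.factorial ν)))
      (fun ν => G ν x)
      (fun ν => by positivity)
      (fun ν hν => inv_nonneg.mpr (hpos ν hν).le)
      (fun ν hν => by
        have h1 := hpos ν hν
        have h2 := hmono ν hν
        exact inv_anti₀ h1 h2)
      (by simp [G])
      (fun ν => G_succ ν x) n
    calc (0 : ℝ) ≤ 2 * ∑ ν ∈ Finset.range (n + 1), (α ν)⁻¹ * G ν x := by
          have := hk.1; linarith
      _ = ∑ ν ∈ Finset.range (n + 1), (α ν)⁻¹ * (2 * G ν x) := by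
          rw [Finset.mul_sum]; exact Finset.sum_congr rfl fun ν _ => by ring
  refine ⟨main, ?_⟩
  apply monotoneOn_of_deriv_nonneg (convex_Ici 0)
  · apply Continuous.continuousOn
    apply continuous_finset_sum
    intro ν _
    simp only [normHermite]
    exact continuous_const.mul (((Polynomial.continuous_aeval _).div_const _).pow 2)
  · intro x hx
    exact (hasDerivAt_f α n x).differentiableAt.differentiableWithinAt
  · intro x hx
    rw [interior_Ici] at hx
    exact main x hx.le
end

section
/- Let (α_ν)_{ν∈ℕ} be a non-decreasing sequence of positive reals with Σ_{ν∈ℕ} α_ν^{-1} ν^{-1/2} < ∞, and define k(x,y) := 1 + Σ_{ν∈ℕ} α_ν^{-1} h_ν(x) h_ν(y). Then for all x, y ∈ ℝ with |x| ≤ |y| one has k(x,x) ≤ k(y,y). In particular, min_{a∈ℝ} k(a,a) = k(0,0). -/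
set_option maxHeartbeats 2000000

/-- The univariate Hermite kernel with Fourier weights `α` (here `α ν` stands for `α_{ν+1}`,
i.e., the index of the sequence of Fourier weights starts at `1`). -/
noncomputable def hermiteKernel (α : ℕ → ℝ) (x y : ℝ) : ℝ :=
  1 + ∑' ν : ℕ, (α ν)⁻¹ * normHermite (ν + 1) x * normHermite (ν + 1) y

namespace HK

open Polynomial Real

theorem derivative_hermite (n : ℕ) :
    derivative (hermite (n + 1)) = ((n : ℤ) + 1) * hermite n := by
  induction n with
  | zero => simp [hermite_succ, hermite_zero, hermite_one]
  | succ n ih =>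
    rw [hermite_succ (n + 1), derivative_sub, derivative_mul, derivative_X, ih, one_mul,
      derivative_mul, hermite_succ n]
    have : derivative ((n:ℤ) + 1 : Polynomial ℤ) = 0 := by simp
    rw [this]
    push_cast
    ring

/-- unnormalized evaluation -/
noncomputable def H (n : ℕ) (x : ℝ) : ℝ := Polynomial.aeval x (Polynomial.hermite n)

theorem H_zero (x : ℝ) : H 0 x = 1 := by simp [H, hermite_zero]

theorem H_one (x : ℝ) : H 1 x = x := by simp [H, hermite_one]

theorem H_rec (n : ℕ) (x : ℝ) :
    H (n + 2) x = x * H (n + 1) x - ((n : ℝ) + 1) * H n x := by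
  have h := hermite_succ (n + 1)
  rw [derivative_hermite] at h
  have h2 := congrArg (Polynomial.aeval x (R := ℤ)) h
  simpa [H, mul_comm] using h2

theorem H_neg (n : ℕ) (x : ℝ) : H n (-x) = (-1) ^ n * H n x := by
  induction n using Nat.strong_induction_on with
  | _ n ih =>
    match n with
    | 0 => simp [H_zero]
    | 1 => simp [H_one]
    | (n + 2) =>
      rw [H_rec, H_rec, ih (n+1) (by omega), ih n (by omega)]
      ring

theorem hasDerivAt_H (n : ℕ) (x : ℝ) :
    HasDerivAt (H (n + 1)) (((n : ℝ) + 1) * H n x) x := by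
  have h1 : H (n + 1) = fun y => Polynomial.eval y ((hermite (n+1)).map (Int.castRingHom ℝ)) := by
    funext y; simp [H, aeval_def, eval₂_eq_eval_map]
  rw [h1]
  have h2 := Polynomial.hasDerivAt ((hermite (n+1)).map (Int.castRingHom ℝ)) x
  refine h2.congr_deriv ?_
  rw [derivative_map, derivative_hermite]
  simp [H, aeval_def, eval₂_eq_eval_map]


noncomputable def hn (n : ℕ) (x : ℝ) : ℝ := normHermite n x

theorem hn_eq (n : ℕ) (x : ℝ) : hn n x = H n x / Real.sqrt (Nat.factorial n) := rfl

theorem sqrt_factorial_pos (n : ℕ) : 0 < Real.sqrt (Nat.factorial n) := by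
  apply Real.sqrt_pos.mpr
  exact_mod_cast Nat.factorial_pos n

theorem sqrt_factorial_succ (n : ℕ) :
    Real.sqrt (Nat.factorial (n + 1)) = Real.sqrt ((n : ℝ) + 1) * Real.sqrt (Nat.factorial n) := by
  rw [← Real.sqrt_mul (by positivity)]
  congr 1
  rw [Nat.factorial_succ]
  push_cast
  ring

theorem hn_zero (x : ℝ) : hn 0 x = 1 := by
  simp [hn_eq, H_zero, Nat.factorial]

theorem hn_one (x : ℝ) : hn 1 x = x := by
  simp [hn_eq, H_one, Nat.factorial]

/-- Three-term recurrence, normalized. Valid for all `m` using `ℕ`-subtraction. -/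
theorem hn_rec (m : ℕ) (x : ℝ) :
    Real.sqrt ((m : ℝ) + 1) * hn (m + 1) x
      = x * hn m x - Real.sqrt (m : ℝ) * hn (m - 1) x := by
  match m with
  | 0 => simp [hn_zero, hn_one]
  | (m + 1) =>
    have hfm := sqrt_factorial_pos m
    have h1 := sqrt_factorial_succ m
    have h2 := sqrt_factorial_succ (m + 1)
    have hs1 : (0:ℝ) < Real.sqrt ((m:ℝ) + 1) := by positivity
    have hs2 : (0:ℝ) < Real.sqrt ((m:ℝ) + 1 + 1) := by positivity
    have hrec := H_rec m x
    simp only [hn_eq]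
    push_cast
    rw [h2, h1]
    field_simp
    set s := Real.sqrt ((m:ℝ) + 1) with hs
    set t := Real.sqrt ((m:ℝ) + 1 + 1) with ht
    set f := Real.sqrt ((m:ℕ).factorial : ℝ) with hf
    have hsq : (m:ℝ) + 1 = s * s := (Real.mul_self_sqrt (by positivity : (0:ℝ) ≤ (m:ℝ)+1)).symm
    rw [hrec, hsq]
    rw [ht]
    push_cast
    ring_nf

theorem hasDerivAt_hn_succ (m : ℕ) (x : ℝ) :
    HasDerivAt (hn (m + 1)) (Real.sqrt ((m : ℝ) + 1) * hn m x) x := by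
  have h := (hasDerivAt_H m x).div_const (Real.sqrt (Nat.factorial (m + 1)))
  have he : (fun y => H (m+1) y / Real.sqrt (Nat.factorial (m+1))) = hn (m+1) := by
    funext y; rw [hn_eq]
  rw [he] at h
  refine h.congr_deriv ?_
  rw [hn_eq, sqrt_factorial_succ]
  have hfm := sqrt_factorial_pos m
  have hs1 : (0:ℝ) < Real.sqrt ((m:ℝ) + 1) := by positivity
  set s := Real.sqrt ((m:ℝ) + 1) with hs
  have hsq : (m:ℝ) + 1 = s * s := (Real.mul_self_sqrt (by positivity : (0:ℝ) ≤ (m:ℝ)+1)).symm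
  rw [hsq]
  field_simp

theorem hn_neg (n : ℕ) (x : ℝ) : hn n (-x) = (-1) ^ n * hn n x := by
  rw [hn_eq, hn_eq, H_neg]
  ring

theorem hn_sq_neg (n : ℕ) (x : ℝ) : hn n (-x) ^ 2 = hn n x ^ 2 := by
  rw [hn_neg]
  rcases Nat.even_or_odd n with h | h
  · rw [h.neg_one_pow]; ring
  · rw [h.neg_one_pow]; ring

theorem hn_sq_abs (n : ℕ) (x : ℝ) : hn n |x| ^ 2 = hn n x ^ 2 := by
  rcases abs_choice x with h | h
  · rw [h]
  · rw [h, hn_sq_neg]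

/-- recurrence at zero -/
theorem hn_zero_rec (m : ℕ) :
    ((m : ℝ) + 1) * hn (m + 1) 0 ^ 2 = (m : ℝ) * hn (m - 1) 0 ^ 2 := by
  have h := hn_rec m 0
  rw [zero_mul] at h
  have h2 := congrArg (fun t => t ^ 2) h
  have e1 : Real.sqrt ((m:ℝ)+1) ^ 2 = (m:ℝ) + 1 := Real.sq_sqrt (by positivity)
  have e2 : Real.sqrt (m:ℝ) ^ 2 = (m:ℝ) := Real.sq_sqrt (by positivity)
  nlinarith [h2, e1, e2]

theorem hn_zero_sq_le (m : ℕ) : hn m 0 ^ 2 ≤ 2 / Real.sqrt ((m : ℝ) + 1) := by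
  induction m using Nat.strong_induction_on with
  | _ m ih =>
    match m with
    | 0 => rw [hn_zero]; norm_num
    | 1 =>
      have hv : hn 1 0 = 0 := hn_one 0
      rw [hv]
      have h0 : (0:ℝ) ≤ 2 / Real.sqrt ((1:ℝ) + 1) := by positivity
      push_cast
      simpa using h0
    | (m + 2) =>
      have ihm := ih m (by omega)
      have hs1 : (0:ℝ) < Real.sqrt ((m:ℝ) + 1) := by positivity
      have hs3 : (0:ℝ) < Real.sqrt ((m:ℝ) + 2 + 1) := by positivity
      have hsq : Real.sqrt ((m:ℝ)+1) * Real.sqrt ((m:ℝ)+1) = (m:ℝ) + 1 :=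
        Real.mul_self_sqrt (by positivity)
      have hkey2 : hn (m + 2) 0 ^ 2 = ((m:ℝ) + 1) / ((m:ℝ) + 2) * hn m 0 ^ 2 := by
        have h := hn_zero_rec (m + 1)
        push_cast at h
        try simp only [Nat.add_sub_cancel] at h
        have hm2 : ((m:ℝ) + 2) ≠ 0 := by positivity
        have h' : ((m:ℝ) + 2) * hn (m + 2) 0 ^ 2 = ((m:ℝ) + 1) * hn m 0 ^ 2 := by
          convert h using 2 <;> push_cast <;> ring
        field_simp
        linarith [h']
      rw [hkey2]
      have hprod : Real.sqrt ((m:ℝ) + 1) * Real.sqrt ((m:ℝ) + 2 + 1) ≤ (m:ℝ) + 2 := by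
        rw [← Real.sqrt_mul (by positivity)]
        calc Real.sqrt (((m:ℝ)+1) * ((m:ℝ)+2+1)) ≤ Real.sqrt (((m:ℝ)+2)^2) :=
              Real.sqrt_le_sqrt (by nlinarith)
          _ = (m:ℝ)+2 := Real.sqrt_sq (by positivity)
      have h2 : ((m:ℝ) + 1) / ((m:ℝ) + 2) * hn m 0 ^ 2
          ≤ ((m:ℝ) + 1) / ((m:ℝ) + 2) * (2 / Real.sqrt ((m:ℝ) + 1)) :=
        mul_le_mul_of_nonneg_left ihm (by positivity)
      refine h2.trans ?_
      have heq : ((m:ℝ)+1)/((m:ℝ)+2) * (2 / Real.sqrt ((m:ℝ)+1))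
          = 2 * Real.sqrt ((m:ℝ)+1) / ((m:ℝ)+2) := by
        field_simp
        nlinarith [hsq]
      rw [heq]
      push_cast
      rw [div_le_div_iff₀ (by positivity) hs3]
      nlinarith [hprod]

/-- partial sums of squares (starting from index 1) -/
noncomputable def P (N : ℕ) (z : ℝ) : ℝ := ∑ ν ∈ Finset.range N, hn (ν + 1) z ^ 2

noncomputable def g (m : ℕ) (z : ℝ) : ℝ := Real.sqrt (m : ℝ) * hn m z * hn (m - 1) z

noncomputable def A (N : ℕ) (z : ℝ) : ℝ := ∑ ν ∈ Finset.range N, g (ν + 1) z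

theorem g_zero (z : ℝ) : g 0 z = 0 := by simp [g]

theorem g_rec (m : ℕ) (z : ℝ) : g (m + 1) z = z * hn m z ^ 2 - g m z := by
  have h := hn_rec m z
  have : g (m + 1) z = (Real.sqrt ((m:ℝ) + 1) * hn (m + 1) z) * hn m z := by
    simp only [g, Nat.add_sub_cancel]
    push_cast
    ring
  rw [this, h, g]
  ring

theorem A_succ (N : ℕ) (z : ℝ) : A (N + 1) z = A N z + g (N + 1) z := by
  simp [A, Finset.sum_range_succ]

theorem A_rec2 (N : ℕ) (z : ℝ) : A (N + 2) z = A N z + z * hn (N + 1) z ^ 2 := by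
  rw [A_succ (N+1), A_succ N, g_rec (N+1)]
  ring

theorem A_nonneg (N : ℕ) (z : ℝ) (hz : 0 ≤ z) : 0 ≤ A N z := by
  induction N using Nat.strong_induction_on with
  | _ N ih =>
    match N with
    | 0 => simp [A]
    | 1 =>
      have : A 1 z = z * hn 0 z ^ 2 := by
        rw [A_succ 0, g_rec 0, g_zero]
        simp [A]
      rw [this]
      positivity
    | (N + 2) =>
      rw [A_rec2]
      have h1 := ih N (by omega)
      have h2 : 0 ≤ z * hn (N + 1) z ^ 2 := by positivity
      linarith

theorem hasDerivAt_P (N : ℕ) (z : ℝ) : HasDerivAt (P N) (2 * A N z) z := by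
  have key : ∀ ν : ℕ, HasDerivAt (fun w => hn (ν + 1) w ^ 2) (2 * g (ν + 1) z) z := by
    intro ν
    have h := hasDerivAt_hn_succ ν z
    have h2 := h.pow 2
    refine h2.congr_deriv ?_
    simp only [g, Nat.add_sub_cancel]
    push_cast
    ring
  have hsum : HasDerivAt (fun w => ∑ ν ∈ Finset.range N, hn (ν + 1) w ^ 2)
      (∑ ν ∈ Finset.range N, 2 * g (ν + 1) z) z :=
    HasDerivAt.fun_sum (fun ν _ => key ν)
  have : (∑ ν ∈ Finset.range N, 2 * g (ν + 1) z) = 2 * A N z := by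
    rw [A, Finset.mul_sum]
  rw [← this]
  exact hsum

theorem P_monotoneOn (N : ℕ) : MonotoneOn (P N) (Set.Ici (0:ℝ)) := by
  have hdiff : ∀ z : ℝ, HasDerivAt (P N) (2 * A N z) z := hasDerivAt_P N
  apply monotoneOn_of_deriv_nonneg (convex_Ici 0)
  · exact (Differentiable.continuous fun z => (hdiff z).differentiableAt).continuousOn
  · exact fun z _ => (hdiff z).differentiableAt.differentiableWithinAt
  · intro z hz
    rw [interior_Ici] at hz
    rw [(hdiff z).deriv]
    have := A_nonneg N z (le_of_lt hz)
    linarith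

theorem P_abs (N : ℕ) (x : ℝ) : P N |x| = P N x := by
  unfold P
  exact Finset.sum_congr rfl fun ν _ => hn_sq_abs (ν + 1) x

theorem P_le (N : ℕ) (x y : ℝ) (h : |x| ≤ |y|) : P N x ≤ P N y := by
  rw [← P_abs N x, ← P_abs N y]
  exact P_monotoneOn N (abs_nonneg x) (abs_nonneg y) h

/-! ### Cramér-type bound via Grönwall -/

theorem hasDerivAt_hn (m : ℕ) (x : ℝ) :
    HasDerivAt (hn m) (Real.sqrt (m : ℝ) * hn (m - 1) x) x := by
  match m with
  | 0 =>
    have : hn 0 = fun _ : ℝ => (1:ℝ) := funext hn_zero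
    rw [this]
    simpa using hasDerivAt_const x (1:ℝ)
  | (m + 1) =>
    have h := hasDerivAt_hn_succ m x
    have : Real.sqrt ((m + 1 : ℕ) : ℝ) = Real.sqrt ((m:ℝ) + 1) := by push_cast; ring_nf
    rw [this]
    simpa using h

noncomputable def uf (n : ℕ) (x : ℝ) : ℝ := hn n x * Real.exp (-(x ^ 2) / 4)

noncomputable def vf (n : ℕ) (x : ℝ) : ℝ :=
  (Real.sqrt (n : ℝ) * hn (n - 1) x - x / 2 * hn n x) * Real.exp (-(x ^ 2) / 4)

noncomputable def qf (n : ℕ) (x : ℝ) : ℝ := (n : ℝ) + 1 / 2 - x ^ 2 / 4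

noncomputable def Gf (n : ℕ) (x : ℝ) : ℝ :=
  Real.sqrt (qf n x) * uf n x ^ 2 + vf n x ^ 2 / Real.sqrt (qf n x)

theorem hasDerivAt_exp_part (x : ℝ) :
    HasDerivAt (fun y : ℝ => Real.exp (-(y ^ 2) / 4)) (-(x / 2) * Real.exp (-(x ^ 2) / 4)) x := by
  have h1 : HasDerivAt (fun y : ℝ => -(y ^ 2) / 4) (-(x / 2)) x := by
    have := (hasDerivAt_pow 2 x).neg.div_const 4
    refine this.congr_deriv ?_
    push_cast
    ring
  simpa [mul_comm] using h1.exp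

theorem hasDerivAt_uf (n : ℕ) (x : ℝ) : HasDerivAt (uf n) (vf n x) x := by
  have h := (hasDerivAt_hn n x).mul (hasDerivAt_exp_part x)
  have he : uf n = fun y => hn n y * Real.exp (-(y ^ 2) / 4) := rfl
  rw [he]
  refine h.congr_deriv ?_
  unfold vf
  ring

/-- the recurrence in the form needed for `vf'`. -/
theorem rec_id (n : ℕ) (hn1 : 1 ≤ n) (x : ℝ) :
    Real.sqrt (n:ℝ) * (Real.sqrt ((n-1 : ℕ):ℝ) * hn (n - 1 - 1) x)
      - x * (Real.sqrt (n:ℝ) * hn (n - 1) x) + (n:ℝ) * hn n x = 0 := by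
  obtain ⟨m, rfl⟩ : ∃ m, n = m + 1 := ⟨n - 1, by omega⟩
  have h := hn_rec m x
  have hc1 : ((m + 1 : ℕ) : ℝ) = (m:ℝ) + 1 := by push_cast; ring
  have hsq : Real.sqrt ((m:ℝ)+1) * Real.sqrt ((m:ℝ)+1) = (m:ℝ) + 1 :=
    Real.mul_self_sqrt (by positivity)
  simp only [Nat.add_sub_cancel, hc1]
  linear_combination Real.sqrt ((m:ℝ)+1) * h - hn (m + 1) x * hsq

theorem hasDerivAt_vf (n : ℕ) (hn1 : 1 ≤ n) (x : ℝ) :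
    HasDerivAt (vf n) (-(qf n x) * uf n x) x := by
  have hw : HasDerivAt (fun y => Real.sqrt (n:ℝ) * hn (n - 1) y - y / 2 * hn n y)
      (Real.sqrt (n:ℝ) * (Real.sqrt ((n-1 : ℕ):ℝ) * hn (n - 1 - 1) x)
        - (1 / 2 * hn n x + x / 2 * (Real.sqrt (n:ℝ) * hn (n - 1) x))) x := by
    have h1 := (hasDerivAt_hn (n - 1) x).const_mul (Real.sqrt (n:ℝ))
    have h2 : HasDerivAt (fun y : ℝ => y / 2) (1 / 2 : ℝ) x := by
      simpa using (hasDerivAt_id x).div_const 2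
    have h3 := h2.mul (hasDerivAt_hn n x)
    have h4 := h1.sub h3
    exact h4
  have h := hw.mul (hasDerivAt_exp_part x)
  have he : vf n = fun y =>
      (Real.sqrt (n:ℝ) * hn (n - 1) y - y / 2 * hn n y) * Real.exp (-(y ^ 2) / 4) := rfl
  rw [he]
  refine h.congr_deriv ?_
  have hrec := rec_id n hn1 x
  unfold qf uf
  linear_combination (Real.exp (-(x ^ 2) / 4)) * hrec

theorem hasDerivAt_qf (n : ℕ) (x : ℝ) : HasDerivAt (qf n) (-(x / 2)) x := by
  unfold qf
  have := ((hasDerivAt_pow 2 x).div_const 4).const_sub ((n:ℝ) + 1/2)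
  refine this.congr_deriv ?_
  push_cast
  ring

theorem hasDerivAt_Gf (n : ℕ) (hn1 : 1 ≤ n) (x : ℝ) (hq : 0 < qf n x) :
    HasDerivAt (Gf n)
      (-(x / 2) / (2 * Real.sqrt (qf n x)) * (uf n x ^ 2 - vf n x ^ 2 / qf n x)) x := by
  have hsq : 0 < Real.sqrt (qf n x) := Real.sqrt_pos.mpr hq
  have hs := (hasDerivAt_qf n x).sqrt hq.ne'
  have hu := hasDerivAt_uf n x
  have hv := hasDerivAt_vf n hn1 x
  have t1 := hs.mul (hu.pow 2)
  have t2 := (hv.pow 2).mul (hs.inv hsq.ne')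
  have hG : Gf n = fun y =>
      Real.sqrt (qf n y) * uf n y ^ 2 + vf n y ^ 2 * (Real.sqrt (qf n y))⁻¹ := by
    funext y; unfold Gf; rw [div_eq_mul_inv]
  rw [hG]
  have hsum := t1.add t2
  refine hsum.congr_deriv ?_
  simp only [Pi.pow_apply, Pi.inv_apply]
  set s := Real.sqrt (qf n x) with hsdef
  have hss : qf n x = s * s := (Real.mul_self_sqrt hq.le).symm
  rw [hss]
  field_simp
  ring

theorem Gf_nonneg (n : ℕ) (x : ℝ) : 0 ≤ Gf n x := by
  unfold Gf
  have h1 : 0 ≤ Real.sqrt (qf n x) := Real.sqrt_nonneg _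
  positivity

/-- The main Cramér-type bound. -/
theorem cramer (n : ℕ) (hn1 : 1 ≤ n) (b : ℝ) (hb0 : 0 ≤ b) (hbn : b ^ 2 ≤ (n : ℝ)) :
    hn n b ^ 2 ≤ 16 * Real.exp (b ^ 2 / 2) / Real.sqrt ((n : ℝ) + 1) := by
  have hn1R : (1 : ℝ) ≤ (n : ℝ) := by exact_mod_cast hn1
  have hq_lb : ∀ x ∈ Set.Icc (0:ℝ) b, 3 / 4 * (n:ℝ) + 1 / 2 ≤ qf n x := by
    intro x hx
    have hx2 : x ^ 2 ≤ b ^ 2 := by nlinarith [hx.1, hx.2]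
    unfold qf
    nlinarith
  have hqpos : ∀ x ∈ Set.Icc (0:ℝ) b, 0 < qf n x := by
    intro x hx
    have := hq_lb x hx
    nlinarith
  have hbIcc : b ∈ Set.Icc (0:ℝ) b := ⟨hb0, le_refl b⟩
  have hqb_lb : 3 / 4 * (n:ℝ) + 1 / 2 ≤ qf n b := hq_lb b hbIcc
  have hqb_pos : 0 < qf n b := hqpos b hbIcc
  set K := b / (4 * qf n b) with hK
  have hK0 : 0 ≤ K := by positivity
  set Ef : ℝ → ℝ := fun x =>
    -(x / 2) / (2 * Real.sqrt (qf n x)) * (uf n x ^ 2 - vf n x ^ 2 / qf n x) with hEf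
  have hf' : ∀ x ∈ Set.Ico (0:ℝ) b, HasDerivWithinAt (Gf n) (Ef x) (Set.Ici x) x := by
    intro x hx
    exact (hasDerivAt_Gf n hn1 x (hqpos x ⟨hx.1, hx.2.le⟩)).hasDerivWithinAt
  have hcont : ContinuousOn (Gf n) (Set.Icc 0 b) := by
    intro x hx
    exact ((hasDerivAt_Gf n hn1 x (hqpos x hx)).differentiableAt.continuousAt).continuousWithinAt
  -- initial bound
  have hG0 : ‖Gf n 0‖ ≤ 4 := by
    have hq0 : qf n 0 = (n:ℝ) + 1 / 2 := by unfold qf; norm_num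
    have hu0 : uf n 0 = hn n 0 := by unfold uf; norm_num
    have hv0 : vf n 0 = Real.sqrt (n:ℝ) * hn (n - 1) 0 := by unfold vf; norm_num
    have hsn : (0:ℝ) < Real.sqrt (n:ℝ) := Real.sqrt_pos.mpr (by linarith)
    have hsq0 : (0:ℝ) < Real.sqrt ((n:ℝ) + 1/2) := by positivity
    have hsn1 : (0:ℝ) < Real.sqrt ((n:ℝ) + 1) := by positivity
    have hterm1 : Real.sqrt ((n:ℝ) + 1/2) * hn n 0 ^ 2 ≤ 2 := by
      have h1 : Real.sqrt ((n:ℝ) + 1/2) ≤ Real.sqrt ((n:ℝ) + 1) :=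
        Real.sqrt_le_sqrt (by linarith)
      have h2 := hn_zero_sq_le n
      calc Real.sqrt ((n:ℝ) + 1/2) * hn n 0 ^ 2
          ≤ Real.sqrt ((n:ℝ) + 1) * (2 / Real.sqrt ((n:ℝ) + 1)) := by
            apply mul_le_mul h1 h2 (sq_nonneg _) hsn1.le
        _ = 2 := by field_simp
    have hterm2 : (Real.sqrt (n:ℝ) * hn (n - 1) 0) ^ 2 / Real.sqrt ((n:ℝ) + 1/2) ≤ 2 := by
      have hcast : ((n - 1 : ℕ) : ℝ) + 1 = (n : ℝ) := by
        have : ((n - 1 : ℕ) : ℝ) = (n : ℝ) - 1 := by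
          have := Nat.cast_sub hn1 (R := ℝ)
          simpa using this
        rw [this]; ring
      have h2 := hn_zero_sq_le (n - 1)
      rw [hcast] at h2
      have hself : Real.sqrt (n:ℝ) * Real.sqrt (n:ℝ) = (n:ℝ) :=
        Real.mul_self_sqrt (by linarith)
      have hv2 : (Real.sqrt (n:ℝ) * hn (n - 1) 0) ^ 2 ≤ 2 * Real.sqrt (n:ℝ) := by
        have : (Real.sqrt (n:ℝ) * hn (n - 1) 0) ^ 2 = (n:ℝ) * hn (n - 1) 0 ^ 2 := by
          rw [mul_pow]; rw [sq]; rw [hself]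
        rw [this]
        calc (n:ℝ) * hn (n - 1) 0 ^ 2 ≤ (n:ℝ) * (2 / Real.sqrt (n:ℝ)) :=
              mul_le_mul_of_nonneg_left h2 (by linarith)
          _ = 2 * Real.sqrt (n:ℝ) := by
              rw [mul_div_assoc', div_eq_iff hsn.ne']
              nlinarith [hself]
      have hmono : Real.sqrt (n:ℝ) ≤ Real.sqrt ((n:ℝ) + 1/2) :=
        Real.sqrt_le_sqrt (by linarith)
      calc (Real.sqrt (n:ℝ) * hn (n - 1) 0) ^ 2 / Real.sqrt ((n:ℝ) + 1/2)
          ≤ 2 * Real.sqrt (n:ℝ) / Real.sqrt ((n:ℝ) + 1/2) := by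
            gcongr
        _ ≤ 2 := by
            rw [div_le_iff₀ hsq0]
            nlinarith [hmono, hsn]
    have : Gf n 0 ≤ 4 := by
      unfold Gf
      rw [hq0, hu0, hv0]
      linarith [hterm1, hterm2]
    rw [Real.norm_eq_abs, abs_of_nonneg (Gf_nonneg n 0)]
    exact this
  -- derivative bound
  have hbound : ∀ x ∈ Set.Ico (0:ℝ) b, ‖Ef x‖ ≤ K * ‖Gf n x‖ + 0 := by
    intro x hx
    have hxIcc : x ∈ Set.Icc (0:ℝ) b := ⟨hx.1, hx.2.le⟩
    have hq := hqpos x hxIcc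
    have hs : (0:ℝ) < Real.sqrt (qf n x) := Real.sqrt_pos.mpr hq
    have hss : qf n x = Real.sqrt (qf n x) * Real.sqrt (qf n x) := (Real.mul_self_sqrt hq.le).symm
    have hGx := Gf_nonneg n x
    rw [Real.norm_eq_abs, Real.norm_eq_abs, abs_of_nonneg hGx, add_zero]
    have habs : |Ef x| ≤ x / (4 * qf n x) * Gf n x := by
      rw [hEf]
      simp only
      rw [abs_mul]
      have h1 : |(-(x / 2) / (2 * Real.sqrt (qf n x)))| = x / (4 * Real.sqrt (qf n x)) := by
        rw [abs_div, abs_neg, abs_of_nonneg (by linarith [hx.1] : (0:ℝ) ≤ x / 2),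
          abs_of_nonneg (by positivity : (0:ℝ) ≤ 2 * Real.sqrt (qf n x))]
        ring
      rw [h1]
      have h2 : |uf n x ^ 2 - vf n x ^ 2 / qf n x| ≤ uf n x ^ 2 + vf n x ^ 2 / qf n x := by
        have ha : |uf n x ^ 2| = uf n x ^ 2 := abs_of_nonneg (sq_nonneg _)
        have hb' : |vf n x ^ 2 / qf n x| = vf n x ^ 2 / qf n x :=
          abs_of_nonneg (by positivity)
        calc |uf n x ^ 2 - vf n x ^ 2 / qf n x| ≤ |uf n x ^ 2| + |vf n x ^ 2 / qf n x| :=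
              abs_sub _ _
          _ = uf n x ^ 2 + vf n x ^ 2 / qf n x := by rw [ha, hb']
      have h3 : x / (4 * Real.sqrt (qf n x)) * (uf n x ^ 2 + vf n x ^ 2 / qf n x)
          = x / (4 * qf n x) * Gf n x := by
        unfold Gf
        set s := Real.sqrt (qf n x) with hsdef
        have hss2 : qf n x = s * s := (Real.mul_self_sqrt hq.le).symm
        rw [hss2]
        have hs0 : s ≠ 0 := hs.ne'
        field_simp
      calc x / (4 * Real.sqrt (qf n x)) * |uf n x ^ 2 - vf n x ^ 2 / qf n x|
          ≤ x / (4 * Real.sqrt (qf n x)) * (uf n x ^ 2 + vf n x ^ 2 / qf n x) :=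
            mul_le_mul_of_nonneg_left h2 (div_nonneg hx.1 (by positivity))
        _ = x / (4 * qf n x) * Gf n x := h3
    refine habs.trans ?_
    apply mul_le_mul_of_nonneg_right _ hGx
    rw [hK]
    have hq_mono : qf n b ≤ qf n x := by
      unfold qf
      nlinarith [hx.1, hx.2.le]
    exact div_le_div₀ hb0 hx.2.le (by linarith) (by linarith)
  -- Grönwall
  have hGb := norm_le_gronwallBound_of_norm_deriv_right_le hcont hf' hG0 hbound b
    ⟨hb0, le_refl b⟩
  rw [gronwallBound_ε0, sub_zero] at hGb
  -- K * b ≤ 1/3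
  have hKb : K * b ≤ 1 / 3 := by
    rw [hK]
    rw [div_mul_eq_mul_div, div_le_iff₀ (by positivity)]
    nlinarith [hqb_lb, hbn, hb0]
  have hexp : Real.exp (K * b) ≤ Real.exp 1 := Real.exp_le_exp.mpr (by linarith)
  have he1 : Real.exp 1 < 2.7182818286 := Real.exp_one_lt_d9
  have hGb2 : Gf n b ≤ 11 := by
    have h0 : Gf n b ≤ 4 * Real.exp (K * b) := by
      rw [Real.norm_eq_abs, abs_of_nonneg (Gf_nonneg n b)] at hGb
      exact hGb
    have h4 : (4:ℝ) * Real.exp (K * b) ≤ 4 * Real.exp 1 := by linarith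
    linarith
  -- extract u b ^ 2
  have hsb : (0:ℝ) < Real.sqrt (qf n b) := Real.sqrt_pos.mpr hqb_pos
  have hub : uf n b ^ 2 ≤ 11 / Real.sqrt (qf n b) := by
    have h1 : Real.sqrt (qf n b) * uf n b ^ 2 ≤ Gf n b := by
      unfold Gf
      have : 0 ≤ vf n b ^ 2 / Real.sqrt (qf n b) := by positivity
      linarith
    rw [le_div_iff₀ hsb]
    nlinarith [h1, hGb2]
  -- lower bound for sqrt (qf n b)
  have hq58 : (5/8 : ℝ) * ((n:ℝ) + 1) ≤ qf n b := by nlinarith [hqb_lb]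
  have hsn1 : (0:ℝ) < Real.sqrt ((n:ℝ) + 1) := by positivity
  have hsqb_lb : (7/10 : ℝ) * Real.sqrt ((n:ℝ) + 1) ≤ Real.sqrt (qf n b) := by
    have h1 : Real.sqrt ((5/8 : ℝ) * ((n:ℝ) + 1)) ≤ Real.sqrt (qf n b) :=
      Real.sqrt_le_sqrt hq58
    refine le_trans ?_ h1
    rw [Real.sqrt_mul (by norm_num : (0:ℝ) ≤ 5/8)]
    apply mul_le_mul_of_nonneg_right _ hsn1.le
    have : (7/10 : ℝ) = Real.sqrt ((7/10)^2) := (Real.sqrt_sq (by norm_num)).symm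
    rw [this]
    apply Real.sqrt_le_sqrt
    norm_num
  have hub2 : uf n b ^ 2 ≤ 16 / Real.sqrt ((n:ℝ) + 1) := by
    have h1 : 11 / Real.sqrt (qf n b) ≤ 11 / ((7/10) * Real.sqrt ((n:ℝ) + 1)) := by
      apply div_le_div_of_nonneg_left (by norm_num) (by positivity) hsqb_lb
    have h2 : 11 / ((7/10 : ℝ) * Real.sqrt ((n:ℝ) + 1)) ≤ 16 / Real.sqrt ((n:ℝ) + 1) := by
      rw [div_le_div_iff₀ (by positivity) hsn1]
      nlinarith [hsn1]
    exact hub.trans (h1.trans h2)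
  -- convert back to hn
  have hfinal : hn n b ^ 2 = uf n b ^ 2 * Real.exp (b ^ 2 / 2) := by
    unfold uf
    rw [mul_pow, ← Real.exp_nat_mul]
    rw [mul_assoc, ← Real.exp_add]
    have he0 : (2:ℕ) * (-b ^ 2 / 4) + b ^ 2 / 2 = 0 := by push_cast; ring
    rw [he0, Real.exp_zero, mul_one]
  rw [hfinal]
  calc uf n b ^ 2 * Real.exp (b ^ 2 / 2)
      ≤ 16 / Real.sqrt ((n:ℝ) + 1) * Real.exp (b ^ 2 / 2) :=
        mul_le_mul_of_nonneg_right hub2 (Real.exp_pos _).le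
    _ = 16 * Real.exp (b ^ 2 / 2) / Real.sqrt ((n:ℝ) + 1) := by ring

/-! ### Summability and Abel summation -/

theorem cramer' (n : ℕ) (y : ℝ) (hn1 : 1 ≤ n) (hbn : y ^ 2 ≤ (n : ℝ)) :
    hn n y ^ 2 ≤ 16 * Real.exp (y ^ 2 / 2) / Real.sqrt ((n : ℝ) + 1) := by
  rw [← hn_sq_abs]
  have h := cramer n hn1 |y| (abs_nonneg y) (by rwa [sq_abs])
  rwa [sq_abs] at h

theorem rpow_half_eq (ν : ℕ) :
    ((ν : ℝ) + 1) ^ (-(1:ℝ) / 2) = (Real.sqrt ((ν:ℝ) + 1))⁻¹ := by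
  rw [Real.sqrt_eq_rpow, ← Real.rpow_neg (by positivity)]
  norm_num

theorem summable_at (c : ℕ → ℝ) (hc0 : ∀ ν, 0 ≤ c ν)
    (hsum : Summable fun ν : ℕ => c ν * ((ν : ℝ) + 1) ^ (-(1:ℝ) / 2)) (y : ℝ) :
    Summable fun ν : ℕ => c ν * hn (ν + 1) y ^ 2 := by
  set M : ℕ := Nat.ceil (y ^ 2) with hM
  rw [← summable_nat_add_iff M]
  have hsum' : Summable fun ν : ℕ =>
      (16 * Real.exp (y ^ 2 / 2)) * (c (ν + M) * ((ν + M : ℝ) + 1) ^ (-(1:ℝ) / 2)) := by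
    apply Summable.mul_left
    have := (summable_nat_add_iff (f := fun ν : ℕ => c ν * ((ν : ℝ) + 1) ^ (-(1:ℝ) / 2)) M).mpr hsum
    refine this.congr fun ν => ?_
    push_cast
    rfl
  apply Summable.of_nonneg_of_le _ _ hsum'
  · intro ν
    have := sq_nonneg (hn (ν + M + 1) y)
    have := hc0 (ν + M)
    positivity
  · intro ν
    have h1 : 1 ≤ ν + M + 1 := by omega
    have h2 : y ^ 2 ≤ ((ν + M + 1 : ℕ) : ℝ) := by
      have := Nat.le_ceil (y ^ 2)
      push_cast
      calc y ^ 2 ≤ (M : ℝ) := this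
        _ ≤ (ν : ℝ) + M + 1 := by
              have : (0:ℝ) ≤ (ν : ℝ) := Nat.cast_nonneg ν
              push_cast
              linarith
    have hcr := cramer' (ν + M + 1) y h1 h2
    have hmon : Real.sqrt ((ν + M : ℝ) + 1) ≤ Real.sqrt (((ν + M + 1 : ℕ) : ℝ) + 1) := by
      apply Real.sqrt_le_sqrt
      push_cast
      linarith
    have hs1 : (0:ℝ) < Real.sqrt ((ν + M : ℝ) + 1) := by positivity
    have hb : hn (ν + M + 1) y ^ 2 ≤ 16 * Real.exp (y ^ 2 / 2) * (Real.sqrt ((ν + M : ℝ) + 1))⁻¹ := by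
      refine hcr.trans ?_
      rw [div_eq_mul_inv]
      apply mul_le_mul_of_nonneg_left _ (by positivity)
      apply inv_anti₀ hs1 hmon
    calc c (ν + M) * hn (ν + M + 1) y ^ 2
        ≤ c (ν + M) * (16 * Real.exp (y ^ 2 / 2) * (Real.sqrt ((ν + M : ℝ) + 1))⁻¹) :=
          mul_le_mul_of_nonneg_left hb (hc0 _)
      _ = 16 * Real.exp (y ^ 2 / 2) * (c (ν + M) * ((ν + M : ℝ) + 1) ^ (-(1:ℝ) / 2)) := by
          have e := rpow_half_eq (ν + M)
          push_cast at e
          rw [e]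
          ring

/-- Finite Abel-summation comparison. -/
theorem abel_le (c a b : ℕ → ℝ) (hc0 : ∀ ν, 0 ≤ c ν) (hcm : ∀ ν, c (ν + 1) ≤ c ν)
    (hab : ∀ N, ∑ ν ∈ Finset.range N, a ν ≤ ∑ ν ∈ Finset.range N, b ν) (N : ℕ) :
    ∑ ν ∈ Finset.range N, c ν * a ν ≤ ∑ ν ∈ Finset.range N, c ν * b ν := by
  have hA := Finset.sum_range_by_parts c a N
  have hB := Finset.sum_range_by_parts c b N
  simp only [smul_eq_mul] at hA hB
  rw [hA, hB]
  apply sub_le_sub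
  · exact mul_le_mul_of_nonneg_left (hab N) (hc0 _)
  · apply Finset.sum_le_sum
    intro i _
    exact mul_le_mul_of_nonpos_left (hab (i + 1)) (by linarith [hcm i])

end HK

/-- for non-decreasing positive Fourier weights with
`Σ_ν α_ν⁻¹ ν^{-1/2} < ∞`, the diagonal of the Hermite kernel satisfies
`k(x,x) ≤ k(y,y)` whenever `|x| ≤ |y|`; in particular `min_a k(a,a) = k(0,0)`. -/
theorem hermiteKernel_diag_monotone (α : ℕ → ℝ) (hpos : ∀ ν, 0 < α ν)
    (hmono : ∀ ν, α ν ≤ α (ν + 1))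
    (hsum : Summable fun ν : ℕ => (α ν)⁻¹ * ((ν : ℝ) + 1) ^ (-(1 : ℝ) / 2)) :
    (∀ x y : ℝ, |x| ≤ |y| → hermiteKernel α x x ≤ hermiteKernel α y y)
      ∧ ∀ a : ℝ, hermiteKernel α 0 0 ≤ hermiteKernel α a a := by
  set c : ℕ → ℝ := fun ν => (α ν)⁻¹ with hc
  have hc0 : ∀ ν, 0 ≤ c ν := fun ν => inv_nonneg.mpr (hpos ν).le
  have hcm : ∀ ν, c (ν + 1) ≤ c ν := fun ν => inv_anti₀ (hpos ν) (hmono ν)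
  have key : ∀ x y : ℝ, |x| ≤ |y| → hermiteKernel α x x ≤ hermiteKernel α y y := by
    intro x y hxy
    unfold hermiteKernel
    apply add_le_add_right _ 1
    have ex : (∑' ν : ℕ, (α ν)⁻¹ * normHermite (ν + 1) x * normHermite (ν + 1) x)
        = ∑' ν : ℕ, c ν * HK.hn (ν + 1) x ^ 2 :=
      tsum_congr fun ν => by rw [sq]; unfold HK.hn; ring
    have ey : (∑' ν : ℕ, (α ν)⁻¹ * normHermite (ν + 1) y * normHermite (ν + 1) y)
        = ∑' ν : ℕ, c ν * HK.hn (ν + 1) y ^ 2 :=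
      tsum_congr fun ν => by rw [sq]; unfold HK.hn; ring
    rw [ex, ey]
    have hsummy : Summable fun ν : ℕ => c ν * HK.hn (ν + 1) y ^ 2 :=
      HK.summable_at c hc0 hsum y
    apply Real.tsum_le_of_sum_range_le
    · intro ν
      exact mul_nonneg (hc0 ν) (sq_nonneg _)
    · intro N
      calc ∑ ν ∈ Finset.range N, c ν * HK.hn (ν + 1) x ^ 2
          ≤ ∑ ν ∈ Finset.range N, c ν * HK.hn (ν + 1) y ^ 2 :=
            HK.abel_le c _ _ hc0 hcm (fun N => HK.P_le N x y hxy) N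
        _ ≤ ∑' ν : ℕ, c ν * HK.hn (ν + 1) y ^ 2 :=
            Summable.sum_le_tsum (Finset.range N) (fun i _ => mul_nonneg (hc0 i) (sq_nonneg _)) hsummy
  refine ⟨key, fun a => key 0 a ?_⟩
  simp [abs_nonneg]
end

section
/- Weak discrete Stechkin inequality: for every q > 1 there exist constants c, C > 0 depending only on q such that for every non-increasing sequence (ω_ν)_{ν∈ℕ} of positive reals, c^{-1} sup_{n≥1} n ((1/n) Σ_{ν≥n} ω_ν^q)^{1/q} ≤ sup_{n≥1} n ω_n ≤ C sup_{n≥1} n ((1/n) Σ_{ν≥n} ω_ν^q)^{1/q}. -/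
open scoped ENNReal


lemma aux_bern (q : ℝ) (hq : 1 < q) {b : ℝ} (hb : 2 ≤ b) :
    b ^ (1-q) + (q-1) * b ^ (-q) ≤ (b-1) ^ (1-q) := by
  have hb0 : (0:ℝ) < b := by linarith
  have hb1 : (0:ℝ) < b - 1 := by linarith
  set t : ℝ := 1/b with ht
  have ht0 : 0 < t := by positivity
  have ht1 : t < 1 := by rw [ht]; rw [div_lt_one hb0]; linarith
  have h1 : (1-t) ^ (q-1) ≤ Real.exp (-((q-1)*t)) := by
    have he : 1 - t ≤ Real.exp (-t) := by linarith [Real.add_one_le_exp (-t)]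
    calc (1-t) ^ (q-1) ≤ (Real.exp (-t)) ^ (q-1) :=
          Real.rpow_le_rpow (by linarith) he (by linarith)
      _ = Real.exp (-t * (q-1)) := (Real.exp_mul _ _).symm
      _ = Real.exp (-((q-1)*t)) := by ring_nf
  have h2 : 1 + (q-1)*t ≤ Real.exp ((q-1)*t) := by linarith [Real.add_one_le_exp ((q-1)*t)]
  have hpow_pos : 0 < (1-t) ^ (q-1) := Real.rpow_pos_of_pos (by linarith) _
  have hqt0 : 0 ≤ 1 + (q-1)*t := by nlinarith
  have key : 1 + (q-1)*t ≤ (1-t) ^ (1-q) := by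
    have h3 : (1-t) ^ (1-q) = ((1-t) ^ (q-1))⁻¹ := by
      rw [← Real.rpow_neg (by linarith)]; ring_nf
    rw [h3, ← one_div, le_div_iff₀ hpow_pos]
    calc (1+(q-1)*t) * (1-t)^(q-1) ≤ Real.exp ((q-1)*t) * Real.exp (-((q-1)*t)) :=
          mul_le_mul h2 h1 hpow_pos.le (Real.exp_pos _).le
      _ = 1 := by rw [← Real.exp_add]; simp
  have hmul : (b-1) = b * (1-t) := by rw [ht]; field_simp
  have heq : (b-1) ^ (1-q) = b ^ (1-q) * (1-t) ^ (1-q) := by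
    rw [hmul, Real.mul_rpow hb0.le (by linarith)]
  have hbp : 0 < b ^ (1-q) := Real.rpow_pos_of_pos hb0 _
  have hlast : b ^ (1-q) * t = b ^ (-q) := by
    rw [ht, one_div, ← Real.rpow_neg_one b, ← Real.rpow_add hb0]
    ring_nf
  calc b^(1-q) + (q-1)*b^(-q) = b^(1-q) * (1+(q-1)*t) := by rw [← hlast]; ring
    _ ≤ b^(1-q) * (1-t)^(1-q) := mul_le_mul_of_nonneg_left key hbp.le
    _ = (b-1)^(1-q) := heq.symm



lemma aux_summable (q : ℝ) (hq : 1 < q) (n : ℕ) :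
    Summable (fun i : ℕ => ((n:ℝ) + i + 1) ^ (-q)) := by
  have h0 : Summable (fun k : ℕ => (k:ℝ) ^ (-q)) :=
    Real.summable_nat_rpow.2 (by linarith)
  have := (summable_nat_add_iff (n+1)).2 h0
  refine this.congr fun i => ?_
  push_cast
  ring_nf

lemma aux_tail (q : ℝ) (hq : 1 < q) (n : ℕ) :
    ∑' i : ℕ, ((n:ℝ) + i + 1) ^ (-q) ≤ q/(q-1) * ((n:ℝ)+1)^(1-q) := by
  have hq1 : 0 < q - 1 := by linarith
  set f : ℕ → ℝ := fun i => ((n:ℝ) + i + 1) ^ (-q) with hf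
  have hfpos : ∀ i, 0 < f i := fun i => Real.rpow_pos_of_pos (by positivity) _
  have hsum : Summable f := aux_summable q hq n
  set g : ℕ → ℝ := fun i => ((n:ℝ) + i + 1) ^ (1-q) with hg
  have hterm : ∀ i : ℕ, (q-1) * f (i+1) ≤ g i - g (i+1) := by
    intro i
    have hb : (2:ℝ) ≤ (n:ℝ) + i + 2 := by
      have : (0:ℝ) ≤ (n:ℝ) + i := by positivity
      linarith
    have := aux_bern q hq hb
    have he1 : ((n:ℝ) + i + 2) - 1 = (n:ℝ) + i + 1 := by ring
    rw [he1] at this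
    have he2 : ((n:ℝ) + (i+1:ℕ) + 1) = (n:ℝ) + i + 2 := by push_cast; ring
    simp only [hf, hg, he2]
    linarith
  -- tail bound
  have htail : ∑' i : ℕ, f (i+1) ≤ (1/(q-1)) * g 0 := by
    apply Real.tsum_le_of_sum_range_le (fun i => (hfpos _).le)
    intro N
    have hsum_tel : ∑ i ∈ Finset.range N, (g i - g (i+1)) = g 0 - g N :=
      Finset.sum_range_sub' g N
    have h1 : (q-1) * ∑ i ∈ Finset.range N, f (i+1) ≤ g 0 - g N := by
      rw [Finset.mul_sum, ← hsum_tel]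
      exact Finset.sum_le_sum fun i _ => hterm i
    have hgN : 0 ≤ g N := Real.rpow_nonneg (by positivity) _
    rw [div_mul_eq_mul_div, le_div_iff₀ hq1]
    nlinarith
  have hsplit : ∑' i : ℕ, f i = f 0 + ∑' i : ℕ, f (i+1) := by
    simpa using Summable.tsum_eq_zero_add hsum
  rw [hsplit]
  have hf0 : f 0 ≤ ((n:ℝ)+1) ^ (1-q) := by
    simp only [hf]
    push_cast
    rw [add_zero]
    exact Real.rpow_le_rpow_of_exponent_le (by norm_num) (by linarith)
  have hg0 : g 0 = ((n:ℝ)+1) ^ (1-q) := by simp [hg]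
  rw [hg0] at htail
  have hpos : (0:ℝ) ≤ ((n:ℝ)+1)^(1-q) := Real.rpow_nonneg (by positivity) _
  have : q/(q-1) = 1 + 1/(q-1) := by field_simp; ring
  rw [this]
  nlinarith

/-- weak discrete Stechkin inequality: for every `q > 1` there are constants
`c, C > 0` depending only on `q` such that for every non-increasing sequence `(ω_ν)_{ν≥1}`
of positive reals (indexed here by `ν : ℕ`, `ν` standing for `ν+1`),
`c⁻¹ sup_n n ((1/n) Σ_{ν≥n} ω_ν^q)^{1/q} ≤ sup_n n ω_n ≤ C sup_n n ((1/n) Σ_{ν≥n} ω_ν^q)^{1/q}`,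
the suprema being taken in the extended nonnegative reals. -/
theorem weak_discrete_stechkin (q : ℝ) (hq : 1 < q) :
    ∃ c C : ℝ, 0 < c ∧ 0 < C ∧ ∀ ω : ℕ → ℝ, (∀ n, 0 < ω n) → Antitone ω →
      (ENNReal.ofReal c)⁻¹ *
          (⨆ n : ℕ, ((n : ℝ≥0∞) + 1) *
            ((∑' i : ℕ, ENNReal.ofReal (ω (n + i) ^ q)) / ((n : ℝ≥0∞) + 1)) ^ (1 / q))
        ≤ (⨆ n : ℕ, ((n : ℝ≥0∞) + 1) * ENNReal.ofReal (ω n))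
      ∧ (⨆ n : ℕ, ((n : ℝ≥0∞) + 1) * ENNReal.ofReal (ω n))
        ≤ ENNReal.ofReal C *
          (⨆ n : ℕ, ((n : ℝ≥0∞) + 1) *
            ((∑' i : ℕ, ENNReal.ofReal (ω (n + i) ^ q)) / ((n : ℝ≥0∞) + 1)) ^ (1 / q)) := by
  have hq0 : (0:ℝ) < q := by linarith
  have hq0' : q ≠ 0 := ne_of_gt hq0
  have hK : (0:ℝ) < q/(q-1) := div_pos hq0 (by linarith)
  set c : ℝ := (q/(q-1)) ^ (1/q) with hc
  have hc0 : (0:ℝ) < c := Real.rpow_pos_of_pos hK _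
  refine ⟨c, 2, hc0, by norm_num, fun ω hpos hanti => ?_⟩
  set S : ℝ≥0∞ := ⨆ n : ℕ, ((n : ℝ≥0∞) + 1) * ENNReal.ofReal (ω n) with hS
  set T : ℝ≥0∞ := ⨆ n : ℕ, ((n : ℝ≥0∞) + 1) *
      ((∑' i : ℕ, ENNReal.ofReal (ω (n + i) ^ q)) / ((n : ℝ≥0∞) + 1)) ^ (1 / q) with hT
  have hn0 : ∀ n : ℕ, ((n : ℝ≥0∞) + 1) ≠ 0 := fun n => by simp
  have hnt : ∀ n : ℕ, ((n : ℝ≥0∞) + 1) ≠ ∞ := fun n => by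
    simp [ENNReal.add_ne_top]
  constructor
  · -- direction 1 : c⁻¹ * T ≤ S
    have hcne : ENNReal.ofReal c ≠ 0 := by simp [ENNReal.ofReal_pos.2 hc0, ne_of_gt]
    have hcnet : ENNReal.ofReal c ≠ ∞ := ENNReal.ofReal_ne_top
    have hTS : T ≤ ENNReal.ofReal c * S := by
      rw [hT]
      apply iSup_le
      intro n
      set A : ℝ≥0∞ := ∑' i : ℕ, ENNReal.ofReal (ω (n + i) ^ q) with hA
      -- pointwise bound ofReal (ω ν) ≤ S / (ν+1)
      have hstep1 : ∀ ν : ℕ, ENNReal.ofReal (ω ν) ≤ S / ((ν : ℝ≥0∞) + 1) := by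
        intro ν
        rw [ENNReal.le_div_iff_mul_le (Or.inl (hn0 ν)) (Or.inl (hnt ν)), mul_comm]
        exact le_iSup (fun k : ℕ => ((k : ℝ≥0∞) + 1) * ENNReal.ofReal (ω k)) ν
      have hstep2 : ∀ ν : ℕ, ENNReal.ofReal (ω ν ^ q) ≤ S ^ q * ((ν : ℝ≥0∞) + 1) ^ (-q) := by
        intro ν
        rw [← ENNReal.ofReal_rpow_of_pos (hpos ν)]
        calc ENNReal.ofReal (ω ν) ^ q ≤ (S / ((ν : ℝ≥0∞) + 1)) ^ q :=
              ENNReal.rpow_le_rpow (hstep1 ν) hq0.le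
          _ = S ^ q * ((ν : ℝ≥0∞) + 1) ^ (-q) := by
              rw [ENNReal.div_rpow_of_nonneg _ _ hq0.le, div_eq_mul_inv,
                ENNReal.rpow_neg]
      have hstep3 : A ≤ S ^ q * ∑' i : ℕ, (((n + i : ℕ) : ℝ≥0∞) + 1) ^ (-q) := by
        rw [← ENNReal.tsum_mul_left]
        exact ENNReal.tsum_le_tsum fun i => hstep2 (n + i)
      have hstep4 : ∑' i : ℕ, (((n + i : ℕ) : ℝ≥0∞) + 1) ^ (-q)
          ≤ ENNReal.ofReal (q/(q-1)) * ((n : ℝ≥0∞) + 1) ^ (1 - q) := by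
        have hterm : ∀ i : ℕ, (((n + i : ℕ) : ℝ≥0∞) + 1) ^ (-q)
            = ENNReal.ofReal (((n:ℝ) + i + 1) ^ (-q)) := by
          intro i
          have h1 : (((n + i : ℕ) : ℝ≥0∞) + 1) = ENNReal.ofReal ((n:ℝ) + i + 1) := by
            rw [ENNReal.ofReal_add (by positivity) zero_le_one, ENNReal.ofReal_one,
              ENNReal.ofReal_add (by positivity) (Nat.cast_nonneg i),
              ENNReal.ofReal_natCast, ENNReal.ofReal_natCast]
            push_cast
            ring
          rw [h1, ENNReal.ofReal_rpow_of_pos (by positivity)]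
        simp_rw [hterm]
        rw [← ENNReal.ofReal_tsum_of_nonneg
          (fun i => Real.rpow_nonneg (by positivity) _) (aux_summable q hq n)]
        calc ENNReal.ofReal (∑' i : ℕ, ((n:ℝ) + i + 1) ^ (-q))
            ≤ ENNReal.ofReal (q/(q-1) * ((n:ℝ)+1) ^ (1-q)) :=
              ENNReal.ofReal_le_ofReal (aux_tail q hq n)
          _ = ENNReal.ofReal (q/(q-1)) * ((n : ℝ≥0∞) + 1) ^ (1 - q) := by
              rw [ENNReal.ofReal_mul hK.le]
              congr 1
              rw [← ENNReal.ofReal_rpow_of_pos (by positivity)]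
              congr 1
              rw [ENNReal.ofReal_add (by positivity) zero_le_one, ENNReal.ofReal_one,
                ENNReal.ofReal_natCast]
      have hstep5 : A / ((n : ℝ≥0∞) + 1)
          ≤ S ^ q * ENNReal.ofReal (q/(q-1)) * ((n : ℝ≥0∞) + 1) ^ (-q) := by
        have hAB : A ≤ S ^ q * (ENNReal.ofReal (q/(q-1)) * ((n : ℝ≥0∞) + 1) ^ (1 - q)) :=
          hstep3.trans (mul_le_mul_right hstep4 _)
        calc A / ((n : ℝ≥0∞) + 1)
            ≤ (S ^ q * (ENNReal.ofReal (q/(q-1)) * ((n : ℝ≥0∞) + 1) ^ (1 - q)))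
                / ((n : ℝ≥0∞) + 1) := ENNReal.div_le_div_right hAB _
          _ = S ^ q * ENNReal.ofReal (q/(q-1))
                * (((n : ℝ≥0∞) + 1) ^ (1 - q) * ((n : ℝ≥0∞) + 1) ^ (-(1:ℝ))) := by
              rw [div_eq_mul_inv, ← ENNReal.rpow_neg_one ((n : ℝ≥0∞) + 1)]
              ring
          _ = S ^ q * ENNReal.ofReal (q/(q-1)) * ((n : ℝ≥0∞) + 1) ^ (-q) := by
              rw [← ENNReal.rpow_add _ _ (hn0 n) (hnt n),
                show (1-q) + (-1:ℝ) = -q by ring]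
      have hstep6 : (A / ((n : ℝ≥0∞) + 1)) ^ (1/q)
          ≤ S * ENNReal.ofReal c * ((n : ℝ≥0∞) + 1)⁻¹ := by
        calc (A / ((n : ℝ≥0∞) + 1)) ^ (1/q)
            ≤ (S ^ q * ENNReal.ofReal (q/(q-1)) * ((n : ℝ≥0∞) + 1) ^ (-q)) ^ (1/q) :=
              ENNReal.rpow_le_rpow hstep5 (div_nonneg zero_le_one hq0.le)
          _ = (S ^ q) ^ (1/q) * (ENNReal.ofReal (q/(q-1))) ^ (1/q)
                * (((n : ℝ≥0∞) + 1) ^ (-q)) ^ (1/q) := by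
              rw [ENNReal.mul_rpow_of_nonneg _ _ (div_nonneg zero_le_one hq0.le),
                ENNReal.mul_rpow_of_nonneg _ _ (div_nonneg zero_le_one hq0.le)]
          _ = S * ENNReal.ofReal c * ((n : ℝ≥0∞) + 1)⁻¹ := by
              rw [← ENNReal.rpow_mul, ← ENNReal.rpow_mul,
                mul_one_div_cancel hq0', ENNReal.rpow_one,
                ENNReal.ofReal_rpow_of_pos hK,
                show (-q) * (1/q) = -1 by field_simp, ENNReal.rpow_neg_one]
      calc ((n : ℝ≥0∞) + 1) * (A / ((n : ℝ≥0∞) + 1)) ^ (1/q)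
          ≤ ((n : ℝ≥0∞) + 1) * (S * ENNReal.ofReal c * ((n : ℝ≥0∞) + 1)⁻¹) :=
            mul_le_mul_right hstep6 _
        _ = (((n : ℝ≥0∞) + 1) * ((n : ℝ≥0∞) + 1)⁻¹) * (S * ENNReal.ofReal c) := by ring
        _ = ENNReal.ofReal c * S := by
            rw [ENNReal.mul_inv_cancel (hn0 n) (hnt n), one_mul, mul_comm]
    calc (ENNReal.ofReal c)⁻¹ * T ≤ (ENNReal.ofReal c)⁻¹ * (ENNReal.ofReal c * S) :=
          mul_le_mul_right hTS _
      _ = S := by rw [← mul_assoc, ENNReal.inv_mul_cancel hcne hcnet, one_mul]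
  · -- direction 2 : S ≤ 2 * T
    have h2 : ENNReal.ofReal (2:ℝ) = 2 := by norm_num
    rw [h2, hS]
    apply iSup_le
    intro m
    set n : ℕ := m / 2 with hn
    set A : ℝ≥0∞ := ∑' i : ℕ, ENNReal.ofReal (ω (n + i) ^ q) with hA
    have hsum_ge : ((n : ℝ≥0∞) + 1) * ENNReal.ofReal (ω m ^ q) ≤ A := by
      calc ((n : ℝ≥0∞) + 1) * ENNReal.ofReal (ω m ^ q)
          = ∑ _i ∈ Finset.range (n+1), ENNReal.ofReal (ω m ^ q) := by
            rw [Finset.sum_const, Finset.card_range, nsmul_eq_mul]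
            push_cast
            ring
        _ ≤ ∑ i ∈ Finset.range (n+1), ENNReal.ofReal (ω (n + i) ^ q) := by
            apply Finset.sum_le_sum
            intro i hi
            apply ENNReal.ofReal_le_ofReal
            apply Real.rpow_le_rpow (hpos m).le _ hq0.le
            apply hanti
            simp only [Finset.mem_range] at hi
            omega
        _ ≤ A := ENNReal.sum_le_tsum _
    have hdiv : ENNReal.ofReal (ω m ^ q) ≤ A / ((n : ℝ≥0∞) + 1) := by
      rw [ENNReal.le_div_iff_mul_le (Or.inl (hn0 n)) (Or.inl (hnt n)), mul_comm]
      exact hsum_ge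
    have hrpow : ENNReal.ofReal (ω m) ≤ (A / ((n : ℝ≥0∞) + 1)) ^ (1/q) := by
      have h1 : ENNReal.ofReal (ω m) = (ENNReal.ofReal (ω m ^ q)) ^ (1/q) := by
        rw [← ENNReal.ofReal_rpow_of_pos (hpos m), ← ENNReal.rpow_mul,
          mul_one_div_cancel hq0', ENNReal.rpow_one]
      rw [h1]
      exact ENNReal.rpow_le_rpow hdiv (div_nonneg zero_le_one hq0.le)
    have hcast : ((m : ℝ≥0∞) + 1) ≤ 2 * ((n : ℝ≥0∞) + 1) := by
      have hnat : ((m + 1 : ℕ) : ℝ≥0∞) ≤ ((2 * (n + 1) : ℕ) : ℝ≥0∞) :=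
        Nat.cast_le.2 (by omega)
      push_cast at hnat
      calc ((m : ℝ≥0∞) + 1) = (m : ℝ≥0∞) + 1 := rfl
        _ ≤ 2 * ((n : ℝ≥0∞) + 1) := by
            refine le_trans (le_of_eq ?_) (hnat.trans (le_of_eq ?_)) <;> ring
    calc ((m : ℝ≥0∞) + 1) * ENNReal.ofReal (ω m)
        ≤ (2 * ((n : ℝ≥0∞) + 1)) * ((A / ((n : ℝ≥0∞) + 1)) ^ (1/q)) :=
          mul_le_mul' hcast hrpow
      _ = 2 * (((n : ℝ≥0∞) + 1) * (A / ((n : ℝ≥0∞) + 1)) ^ (1/q)) := by ring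
      _ ≤ 2 * T := by
          apply mul_le_mul_right
          rw [hT]
          exact le_iSup (fun k : ℕ => ((k : ℝ≥0∞) + 1) *
            ((∑' i : ℕ, ENNReal.ofReal (ω (k + i) ^ q)) / ((k : ℝ≥0∞) + 1)) ^ (1 / q)) n
end

section
/- Let (α_ν)_{ν∈ℕ} be a non-decreasing sequence of positive reals with Σ_ν α_ν^{-1} < ∞, and define β_n := ((1/n) Σ_{ν≥n} α_ν^{-1})^{1/2}. Then decay((β_n)_n) = decay((α_n^{-1/2})_n), where decay(z) := sup{ τ > 0 : Σ_n z_n^{1/τ} < ∞ } (with sup ∅ := 0). -/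
open scoped ENNReal

/-- The decay of a sequence of positive reals:
`decay z = sup { τ > 0 : Σ_n z_n^{1/τ} < ∞ }`, an element of `[0,∞]` (with `sup ∅ = 0`). -/
noncomputable def decay (z : ℕ → ℝ) : ℝ≥0∞ :=
  sSup {p : ℝ≥0∞ | ∃ τ : ℝ, 0 < τ ∧ p = ENNReal.ofReal τ ∧ Summable fun n => z n ^ (1 / τ)}

section Aux

variable {α : ℕ → ℝ}

private lemma tail_summable (hsum : Summable fun n => (α n)⁻¹) (n : ℕ) :
    Summable fun i : ℕ => (α (n + i))⁻¹ := by
  have := (summable_nat_add_iff (f := fun n => (α n)⁻¹) n).2 hsum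
  simpa [add_comm] using this

/-- Sum of `f` over `range (2n)` pairs up even and odd terms. -/
private lemma sum_range_two_mul (f : ℕ → ℝ) (n : ℕ) :
    ∑ k ∈ Finset.range (2 * n), f k
      = ∑ j ∈ Finset.range n, (f (2 * j) + f (2 * j + 1)) := by
  induction n with
  | zero => simp
  | succ m ih =>
      have h2 : 2 * (m + 1) = (2 * m) + 1 + 1 := by omega
      rw [h2, Finset.sum_range_succ, Finset.sum_range_succ, ih, Finset.sum_range_succ]
      ring

/-- If `f` is nonneg, antitone, and summable along even indices, it is summable. -/
private lemma summable_of_summable_even {f : ℕ → ℝ} (hnn : ∀ n, 0 ≤ f n)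
    (hanti : Antitone f) (h : Summable fun n => f (2 * n)) : Summable f := by
  refine summable_of_sum_range_le hnn (c := 2 * ∑' n, f (2 * n)) (fun n => ?_)
  calc ∑ k ∈ Finset.range n, f k
      ≤ ∑ k ∈ Finset.range (2 * n), f k :=
        Finset.sum_le_sum_of_subset_of_nonneg
          (Finset.range_subset_range.2 (by omega)) (fun k _ _ => hnn k)
    _ = ∑ j ∈ Finset.range n, (f (2 * j) + f (2 * j + 1)) := sum_range_two_mul f n
    _ ≤ ∑ j ∈ Finset.range n, (2 * f (2 * j)) := by
        refine Finset.sum_le_sum (fun j _ => ?_)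
        have := hanti (Nat.le_succ (2 * j))
        linarith
    _ = 2 * ∑ j ∈ Finset.range n, f (2 * j) := by rw [Finset.mul_sum]
    _ ≤ 2 * ∑' j, f (2 * j) := by
        have := Summable.sum_le_tsum (Finset.range n) (fun j _ => hnn (2 * j)) h
        linarith

/-- Lower bound: `α (2n)⁻¹ ≤ (1/(n+1)) * tail n`. -/
private lemma inv_le_mean_tail (hpos : ∀ n, 0 < α n) (hmono : Monotone α)
    (hsum : Summable fun n => (α n)⁻¹) (n : ℕ) :
    (α (2 * n))⁻¹ ≤ (1 / ((n : ℝ) + 1)) * ∑' i : ℕ, (α (n + i))⁻¹ := by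
  have hT : ((n : ℝ) + 1) * (α (2 * n))⁻¹ ≤ ∑' i : ℕ, (α (n + i))⁻¹ := by
    have h1 : ((n : ℝ) + 1) * (α (2 * n))⁻¹
        ≤ ∑ i ∈ Finset.range (n + 1), (α (n + i))⁻¹ := by
      have := Finset.card_nsmul_le_sum (Finset.range (n + 1))
        (fun i => (α (n + i))⁻¹) ((α (2 * n))⁻¹) (fun i hi => by
          have hi' : i ≤ n := Nat.lt_succ_iff.mp (Finset.mem_range.mp hi)
          exact inv_anti₀ (hpos _) (hmono (by omega)))
      simpa [nsmul_eq_mul, Nat.cast_add, Nat.cast_one, add_comm] using this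
    exact h1.trans (Summable.sum_le_tsum _ (fun i _ => (inv_pos.2 (hpos _)).le)
      (tail_summable hsum n))
  have hn : (0 : ℝ) < (n : ℝ) + 1 := by positivity
  rw [one_div, ← div_eq_inv_mul, le_div_iff₀ hn, mul_comm]
  exact hT

/-- If `β_n^{1/τ}` is summable then `α_n^{(-1/2)·(1/τ)}` is summable. -/
private lemma summable_alpha_of_summable_beta (hpos : ∀ n, 0 < α n) (hmono : Monotone α)
    (hsum : Summable fun n => (α n)⁻¹) {τ : ℝ} (hτ : 0 < τ)
    (hβ : Summable fun n : ℕ =>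
      (((1 : ℝ) / ((n : ℝ) + 1) * ∑' i : ℕ, (α (n + i))⁻¹) ^ ((1 : ℝ) / 2)) ^ (1 / τ)) :
    Summable fun n => α n ^ ((-(1 : ℝ) / 2) * (1 / τ)) := by
  set f : ℕ → ℝ := fun n => α n ^ ((-(1 : ℝ) / 2) * (1 / τ)) with hf
  have hexp : (-(1 : ℝ) / 2) * (1 / τ) ≤ 0 := by
    have h1 : 0 < 1 / τ := by positivity
    nlinarith
  have hfpos : ∀ n, 0 < f n := fun n => Real.rpow_pos_of_pos (hpos n) _
  have hfanti : Antitone f := fun m n hmn =>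
    Real.rpow_le_rpow_of_nonpos (hpos m) (hmono hmn) hexp
  refine summable_of_summable_even (fun n => (hfpos n).le) hfanti ?_
  refine hβ.of_nonneg_of_le (fun n => (hfpos _).le) (fun n => ?_)
  have hα : (0 : ℝ) < α (2 * n) := hpos _
  have key : f (2 * n) = (((α (2 * n))⁻¹) ^ ((1 : ℝ) / 2)) ^ (1 / τ) := by
    rw [hf, Real.inv_rpow hα.le, ← Real.rpow_neg hα.le, ← Real.rpow_mul hα.le]
    norm_num
  rw [key]
  refine Real.rpow_le_rpow (Real.rpow_nonneg (inv_pos.2 hα).le _) ?_ (by positivity)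
  exact Real.rpow_le_rpow (inv_pos.2 hα).le (inv_le_mean_tail hpos hmono hsum n)
    (by norm_num)

/-- Upper bound: if `α_n^{-1/(2σ)}` is summable with `σ ≥ 1/2`, then for any
`0 < τ' < σ` the sequence `β_n^{1/τ'}` is summable. -/
private lemma summable_beta_rpow (hpos : ∀ n, 0 < α n) (hmono : Monotone α)
    (hsum : Summable fun n => (α n)⁻¹) {σ τ' : ℝ} (hσ : 1 / 2 ≤ σ)
    (hτ'0 : 0 < τ') (hτ' : τ' < σ)
    (hs : Summable fun n => α n ^ (-(1 / (2 * σ)))) :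
    Summable fun n : ℕ =>
      (((1 : ℝ) / ((n : ℝ) + 1) * ∑' i : ℕ, (α (n + i))⁻¹) ^ ((1 : ℝ) / 2)) ^ (1 / τ') := by
  have hσ0 : (0 : ℝ) < σ := lt_of_lt_of_le (by norm_num) hσ
  set ω : ℕ → ℝ := fun n => α n ^ (-(1 / (2 * σ))) with hω
  have hωpos : ∀ n, 0 < ω n := fun n => Real.rpow_pos_of_pos (hpos n) _
  have hωanti : Antitone ω := fun m n hmn =>
    Real.rpow_le_rpow_of_nonpos (hpos m) (hmono hmn)
      (neg_nonpos_of_nonneg (by positivity))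
  set S : ℝ := ∑' n, ω n with hS
  have hSpos : 0 < S := by
    have h0 : ω 0 ≤ S := Summable.le_tsum hs 0 (fun j _ => (hωpos j).le)
    have := hωpos 0
    linarith
  -- ω n ≤ S / (n+1)
  have hωle : ∀ n : ℕ, ω n ≤ S / ((n : ℝ) + 1) := by
    intro n
    have h1 : ((n : ℝ) + 1) * ω n ≤ ∑ k ∈ Finset.range (n + 1), ω k := by
      have := Finset.card_nsmul_le_sum (Finset.range (n + 1)) ω (ω n)
        (fun k hk => hωanti (Nat.lt_succ_iff.mp (Finset.mem_range.mp hk)))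
      simpa [nsmul_eq_mul, Nat.cast_add, Nat.cast_one] using this
    have h2 : ∑ k ∈ Finset.range (n + 1), ω k ≤ S :=
      Summable.sum_le_tsum _ (fun k _ => (hωpos k).le) hs
    have hn : (0 : ℝ) < (n : ℝ) + 1 := by positivity
    rw [le_div_iff₀ hn, mul_comm]
    linarith
  -- (α m)⁻¹ = ω m ^ (2σ)
  have hinv : ∀ m, (α m)⁻¹ = ω m ^ (2 * σ) := by
    intro m
    rw [hω, ← Real.rpow_mul (hpos m).le,
      show -(1 / (2 * σ)) * (2 * σ) = -1 by field_simp,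
      Real.rpow_neg_one]
  have htails : ∀ n : ℕ, Summable fun i : ℕ => ω (n + i) := by
    intro n
    have := (summable_nat_add_iff (f := ω) n).2 hs
    simpa [add_comm] using this
  have htailsum : ∀ n : ℕ, (∑' i : ℕ, ω (n + i)) ≤ S := by
    intro n
    have h := Summable.sum_add_tsum_nat_add (f := ω) n hs
    have hnn : 0 ≤ ∑ k ∈ Finset.range n, ω k :=
      Finset.sum_nonneg fun k _ => (hωpos k).le
    have heq : (∑' i : ℕ, ω (n + i)) = ∑' i : ℕ, ω (i + n) := by
      simp [add_comm]
    rw [heq]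
    linarith [h]
  -- tail bound
  have htail : ∀ n : ℕ,
      (∑' i : ℕ, (α (n + i))⁻¹) ≤ (S / ((n : ℝ) + 1)) ^ (2 * σ - 1) * S := by
    intro n
    have hb : ∀ i : ℕ,
        (α (n + i))⁻¹ ≤ (S / ((n : ℝ) + 1)) ^ (2 * σ - 1) * ω (n + i) := by
      intro i
      have e1 : ω (n + i) ^ (2 * σ) = ω (n + i) ^ (2 * σ - 1) * ω (n + i) := by
        rw [← Real.rpow_add_one (hωpos (n + i)).ne']
        congr 1
        ring
      rw [hinv (n + i), e1]
      refine mul_le_mul_of_nonneg_right ?_ (hωpos (n + i)).le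
      refine Real.rpow_le_rpow (hωpos (n + i)).le ?_ (by linarith)
      exact (hωanti (Nat.le_add_right n i)).trans (hωle n)
    calc (∑' i : ℕ, (α (n + i))⁻¹)
        ≤ ∑' i : ℕ, (S / ((n : ℝ) + 1)) ^ (2 * σ - 1) * ω (n + i) :=
          Summable.tsum_le_tsum hb (tail_summable hsum n) ((htails n).mul_left _)
      _ = (S / ((n : ℝ) + 1)) ^ (2 * σ - 1) * ∑' i : ℕ, ω (n + i) := tsum_mul_left
      _ ≤ (S / ((n : ℝ) + 1)) ^ (2 * σ - 1) * S := by
          refine mul_le_mul_of_nonneg_left (htailsum n) ?_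
          positivity
  -- mean tail bound
  have hβle : ∀ n : ℕ,
      (1 : ℝ) / ((n : ℝ) + 1) * (∑' i : ℕ, (α (n + i))⁻¹)
        ≤ (S / ((n : ℝ) + 1)) ^ (2 * σ) := by
    intro n
    have hn : (0 : ℝ) < (n : ℝ) + 1 := by positivity
    have hx : (0 : ℝ) < S / ((n : ℝ) + 1) := by positivity
    have heq : (1 : ℝ) / ((n : ℝ) + 1) * ((S / ((n : ℝ) + 1)) ^ (2 * σ - 1) * S)
        = (S / ((n : ℝ) + 1)) ^ (2 * σ) := by
      have e2 : (S / ((n : ℝ) + 1)) ^ (2 * σ)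
          = (S / ((n : ℝ) + 1)) ^ (2 * σ - 1) * (S / ((n : ℝ) + 1)) := by
        rw [← Real.rpow_add_one hx.ne']
        congr 1
        ring
      rw [e2]
      ring
    calc (1 : ℝ) / ((n : ℝ) + 1) * (∑' i : ℕ, (α (n + i))⁻¹)
        ≤ (1 : ℝ) / ((n : ℝ) + 1) * ((S / ((n : ℝ) + 1)) ^ (2 * σ - 1) * S) :=
          mul_le_mul_of_nonneg_left (htail n) (by positivity)
      _ = (S / ((n : ℝ) + 1)) ^ (2 * σ) := heq
  -- comparison with summable p-series
  have hp : 1 < σ / τ' := (one_lt_div hτ'0).2 hτ'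
  have hps : Summable fun n : ℕ => ((n : ℝ) + 1) ^ (-(σ / τ')) := by
    have h := Real.summable_nat_rpow.2 (show -(σ / τ') < -1 by linarith)
    have h2 := (summable_nat_add_iff (f := fun n : ℕ => (n : ℝ) ^ (-(σ / τ'))) 1).2 h
    refine h2.congr fun n => ?_
    push_cast
    ring_nf
  refine ((hps.mul_left (S ^ (σ / τ'))).of_nonneg_of_le (fun n => ?_) (fun n => ?_))
  · have h0 : (0 : ℝ) ≤ (1 : ℝ) / ((n : ℝ) + 1) * (∑' i : ℕ, (α (n + i))⁻¹) :=
      mul_nonneg (by positivity) (tsum_nonneg fun i => (inv_pos.2 (hpos _)).le)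
    exact Real.rpow_nonneg (Real.rpow_nonneg h0 _) _
  · have hn : (0 : ℝ) < (n : ℝ) + 1 := by positivity
    have hx : (0 : ℝ) < S / ((n : ℝ) + 1) := by positivity
    have h0 : (0 : ℝ) ≤ (1 : ℝ) / ((n : ℝ) + 1) * (∑' i : ℕ, (α (n + i))⁻¹) :=
      mul_nonneg (by positivity) (tsum_nonneg fun i => (inv_pos.2 (hpos _)).le)
    have step1 : ((1 : ℝ) / ((n : ℝ) + 1) * (∑' i : ℕ, (α (n + i))⁻¹)) ^ ((1 : ℝ) / 2)
        ≤ ((S / ((n : ℝ) + 1)) ^ (2 * σ)) ^ ((1 : ℝ) / 2) :=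
      Real.rpow_le_rpow h0 (hβle n) (by norm_num)
    have step2 := Real.rpow_le_rpow (Real.rpow_nonneg h0 _) step1
      (le_of_lt (by positivity : (0 : ℝ) < 1 / τ'))
    refine step2.trans (le_of_eq ?_)
    rw [← Real.rpow_mul hx.le, ← Real.rpow_mul hx.le,
      show 2 * σ * (1 / 2) * (1 / τ') = σ / τ' by ring,
      Real.div_rpow hSpos.le hn.le, Real.rpow_neg hn.le, div_eq_mul_inv]

end Aux

/-- for a non-decreasing sequence `(α_ν)` of positive reals with
`Σ α_ν⁻¹ < ∞` and `β_n := ((1/n) Σ_{ν≥n} α_ν⁻¹)^{1/2}` (indices shifted by one, so `n`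
stands for `n+1`), one has `decay(β) = decay(α^{-1/2})`. -/
theorem decay_beta_eq (α : ℕ → ℝ) (hpos : ∀ n, 0 < α n) (hmono : Monotone α)
    (hsum : Summable fun n => (α n)⁻¹) :
    decay (fun n => ((1 / ((n : ℝ) + 1)) * ∑' i : ℕ, (α (n + i))⁻¹) ^ ((1 : ℝ) / 2))
      = decay (fun n => α n ^ (-(1 : ℝ) / 2)) := by
  apply le_antisymm
  · -- decay β ≤ decay α^{-1/2}
    refine sSup_le_sSup ?_
    rintro p ⟨τ, hτ, rfl, hs⟩
    refine ⟨τ, hτ, rfl, ?_⟩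
    have h := summable_alpha_of_summable_beta hpos hmono hsum hτ hs
    exact h.congr fun n => by rw [Real.rpow_mul (hpos n).le]
  · -- decay α^{-1/2} ≤ decay β
    refine sSup_le ?_
    rintro p ⟨σ, hσ0, rfl, hsA⟩
    set σ₀ : ℝ := max σ (1 / 2) with hσ₀def
    have hσ₀ : (1 : ℝ) / 2 ≤ σ₀ := le_max_right _ _
    have hσ₀pos : (0 : ℝ) < σ₀ := lt_of_lt_of_le one_half_pos hσ₀
    have hsum₀ : Summable fun n => α n ^ (-(1 / (2 * σ₀))) := by
      rcases le_or_gt σ (1 / 2) with h | h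
      · have heq : σ₀ = 1 / 2 := max_eq_right h
        rw [heq]
        refine hsum.congr fun n => ?_
        rw [show -(1 / (2 * ((1 : ℝ) / 2))) = -1 by norm_num, Real.rpow_neg_one]
      · have heq : σ₀ = σ := max_eq_left h.le
        rw [heq]
        refine hsA.congr fun n => ?_
        rw [← Real.rpow_mul (hpos n).le,
          show -(1 : ℝ) / 2 * (1 / σ) = -(1 / (2 * σ)) by field_simp]
    refine le_trans (ENNReal.ofReal_le_ofReal (le_max_left σ (1 / 2))) ?_
    refine le_of_forall_lt (fun c hc => ?_)
    have hct : c ≠ ⊤ := (hc.trans ENNReal.ofReal_lt_top).ne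
    have hctR : c.toReal < σ₀ := (ENNReal.lt_ofReal_iff_toReal_lt hct).1 hc
    have hcnn : (0 : ℝ) ≤ c.toReal := ENNReal.toReal_nonneg
    set τ' : ℝ := (c.toReal + σ₀) / 2 with hτ'def
    have hτ'0 : 0 < τ' := by rw [hτ'def]; linarith
    have hτ'lt : τ' < σ₀ := by rw [hτ'def]; linarith
    have hmem := summable_beta_rpow hpos hmono hsum hσ₀ hτ'0 hτ'lt hsum₀
    have hstep : ENNReal.ofReal τ'
        ≤ decay (fun n => ((1 / ((n : ℝ) + 1)) * ∑' i : ℕ, (α (n + i))⁻¹) ^ ((1 : ℝ) / 2)) := by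
      rw [decay]
      exact le_sSup ⟨τ', hτ'0, rfl, hmem⟩
    have hlt : c < ENNReal.ofReal τ' := by
      calc c = ENNReal.ofReal c.toReal := (ENNReal.ofReal_toReal hct).symm
        _ < ENNReal.ofReal τ' := (ENNReal.ofReal_lt_ofReal_iff hτ'0).2 (by
            rw [hτ'def]; linarith)
    exact lt_of_lt_of_le hlt hstep
end
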